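/- Let Ω° = {(u,v) ∈ ℝ² : max(|u|, |v|) ≤ 1}. Then cos_{Ω°} and sin_{Ω°} are periodic with period 8, cos_{Ω°} θ = 1 for θ ∈ [0,1] ∪ [7,8] and cos_{Ω°} θ = ½|θ − 3| + ½|θ − 5| − 2 for θ ∈ [1,7], and sin_{Ω°} θ = cos_{Ω°}(θ − 2). -/

import Mathlib

open MeasureTheory Real Set

/-- Counterclockwise polar angle of a point of the plane, in `[0, 2π)`. -/
noncomputable def polarAngle (v : ℝ × ℝ) : ℝ :=
  if 0 ≤ Complex.arg ((v.1 : ℂ) + (v.2 : ℂ) * Complex.I) then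
    Complex.arg ((v.1 : ℂ) + (v.2 : ℂ) * Complex.I)
  else Complex.arg ((v.1 : ℂ) + (v.2 : ℂ) * Complex.I) + 2 * Real.pi

/-- Area of the sector of `Ω` between the positive `x`-axis and the polar angle `β`. -/
noncomputable def sectorArea (Ω : Set (ℝ × ℝ)) (β : ℝ) : ℝ :=
  (volume {v | v ∈ Ω ∧ polarAngle v ≤ β}).toReal

/-- Area of a planar set. -/
noncomputable def area2 (Ω : Set (ℝ × ℝ)) : ℝ := (volume Ω).toReal

/-- `P : ℝ → ℝ × ℝ`, `P θ = (cos_Ω θ, sin_Ω θ)`, is the sector-area parametrization of `∂Ω`: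
for `θ ∈ [0, 2𝕊)` (where `𝕊 = area Ω`), `P θ ∈ ∂Ω` and the sector of `Ω` between the
positive `x`-axis and the ray `O P θ` has area `θ/2`; `P` is `2𝕊`-periodic. -/
def IsCT (Ω : Set (ℝ × ℝ)) (P : ℝ → ℝ × ℝ) : Prop :=
  (∀ θ : ℝ, P (θ + 2 * area2 Ω) = P θ) ∧
  ∀ θ ∈ Set.Ico (0 : ℝ) (2 * area2 Ω),
    P θ ∈ frontier Ω ∧ sectorArea Ω (polarAngle (P θ)) = θ / 2

/-- The polar set `Ω° = {q : ⟨q, v⟩ ≤ 1 ∀ v ∈ Ω}`. -/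
def polarSet (Ω : Set (ℝ × ℝ)) : Set (ℝ × ℝ) :=
  {q | ∀ v ∈ Ω, q.1 * v.1 + q.2 * v.2 ≤ 1}

/-- The covector `q` determines a supporting half-plane of `Ω` at `x`. -/
def Supports (Ω : Set (ℝ × ℝ)) (x q : ℝ × ℝ) : Prop :=
  q.1 * x.1 + q.2 * x.2 = 1 ∧ ∀ v ∈ Ω, q.1 * v.1 + q.2 * v.2 ≤ 1

/-!
Every boundary point of the square is `path θ'` for some `θ' ∈ [0, 8)`, where `path` runs
counterclockwise along the boundary, and the sector cut off by `path θ` has area `θ / 2`; so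
the area condition forces `θ' = θ`. For `θ < 2` that sector is a triangle or a square minus a
triangle. The quarter turn preserves the square and Lebesgue measure and adds `π / 2` to the
polar angle, so each further step of `2` in `θ` adds the quarter square, of area `1`.
-/

theorem Complex.arg_le_arg_iff_im_mul_re_le_re_mul_im {z w : ℂ} (hz : z ≠ 0) (hz' : 0 ≤ z.im)
    (hw : 0 < w.im) : arg z ≤ arg w ↔ z.im * w.re ≤ z.re * w.im := by
  have hw0 : w ≠ 0 := fun h => by simp [h] at hw
  have hnorm : 0 < ‖w‖ * ‖z‖ := mul_pos (norm_pos_iff.2 hw0) (norm_pos_iff.2 hz)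
  have hsin : Real.sin (arg w - arg z) * (‖w‖ * ‖z‖) = z.re * w.im - z.im * w.re := by
    rw [Real.sin_sub, sin_arg, cos_arg hw0, sin_arg, cos_arg hz]
    field_simp
  have hz0 : 0 ≤ arg z := arg_nonneg_iff.2 hz'
  have hw0' : 0 < arg w :=
    (arg_nonneg_iff.2 hw.le).lt_of_ne fun h => hw.ne' (arg_eq_zero_iff.1 h.symm).2
  have hwπ : arg w < π := arg_lt_pi_iff.2 (Or.inr hw.ne')
  have hzπ := arg_le_pi z
  constructor
  · intro h
    have := mul_nonneg (Real.sin_nonneg_of_nonneg_of_le_pi (sub_nonneg.2 h) (by linarith))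
      hnorm.le
    linarith
  · intro h
    by_contra! hlt
    have := mul_neg_of_neg_of_pos
      (Real.sin_neg_of_neg_of_neg_pi_lt (sub_neg.2 hlt) (by linarith)) hnorm
    linarith

theorem MeasureTheory.volume_region_between_cc_eq_integral {f g : ℝ → ℝ} (hf : Continuous f)
    (hg : Continuous g) {a b : ℝ} (hab : a ≤ b) (hfg : ∀ x ∈ Icc a b, f x ≤ g x) :
    volume {p : ℝ × ℝ | p.1 ∈ Icc a b ∧ p.2 ∈ Icc (f p.1) (g p.1)} =
      ENNReal.ofReal (∫ x in a..b, g x - f x) := by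
  have hslice : (fun x => volume (Prod.mk x ⁻¹'
      {p : ℝ × ℝ | p.1 ∈ Icc a b ∧ p.2 ∈ Icc (f p.1) (g p.1)})) =
      (Icc a b).indicator fun x => ENNReal.ofReal (g x - f x) := by
    funext x
    by_cases hx : x ∈ Icc a b
    · rw [indicator_of_mem hx, ← Real.volume_Icc]
      congr 1
      ext y
      simp only [mem_preimage, mem_ofPred_eq, hx, true_and]
    · rw [indicator_of_notMem hx, ← measure_empty (μ := (volume : Measure ℝ))]
      congr 1
      ext y
      simp only [mem_preimage, mem_ofPred_eq, hx, false_and, mem_empty_iff_false]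
  rw [Measure.volume_eq_prod, Measure.prod_apply
      (measurableSet_region_between_cc hf.measurable hg.measurable measurableSet_Icc),
    hslice, lintegral_indicator measurableSet_Icc, intervalIntegral.integral_of_le hab,
    ← integral_Icc_eq_integral_Ioc]
  exact (ofReal_integral_eq_lintegral_ofReal (hg.sub hf).integrableOn_Icc
    ((ae_restrict_iff' measurableSet_Icc).2 (.of_forall fun x hx => sub_nonneg.2 (hfg x hx)))).symm

theorem Function.Periodic.eq_of_eqOn_Ico {α : Type*} {f g : ℝ → α} {c : ℝ}
    (hf : Periodic f c) (hg : Periodic g c) (hc : 0 < c) (h : EqOn f g (Ico 0 c)) : f = g := by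
  funext x
  have hfg : Periodic (fun x => (f x, g x)) c := fun x => by simp only [hf x, hg x]
  obtain ⟨y, hy, hxy⟩ := hfg.exists_mem_Ico₀ hc x
  simp only [Prod.ext_iff] at hxy
  rw [hxy.1, hxy.2, h hy]

open Complex in
theorem polarAngle_of_snd_nonneg {v : ℝ × ℝ} (h : 0 ≤ v.2) :
    polarAngle v = arg (equivRealProd.symm v) := by
  rw [polarAngle, ← equivRealProd_symm_apply, if_pos (arg_nonneg_iff.2 (by simpa using h))]

open Complex in
theorem polarAngle_of_snd_neg {v : ℝ × ℝ} (h : v.2 < 0) :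
    polarAngle v = arg (equivRealProd.symm v) + 2 * π := by
  rw [polarAngle, ← equivRealProd_symm_apply,
    if_neg (not_le.2 (arg_neg_iff.2 (by simpa using h)))]

theorem pi_lt_polarAngle {v : ℝ × ℝ} (h : v.2 < 0) : π < polarAngle v := by
  rw [polarAngle_of_snd_neg h]
  linarith [Complex.neg_pi_lt_arg (Complex.equivRealProd.symm v)]

theorem polarAngle_mem_Ico (v : ℝ × ℝ) : polarAngle v ∈ Ico 0 (2 * π) := by
  rcases le_or_gt 0 v.2 with h | h
  · rw [polarAngle_of_snd_nonneg h]
    exact ⟨Complex.arg_nonneg_iff.2 (by simpa using h),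
      (Complex.arg_le_pi _).trans_lt (by linarith [pi_pos])⟩
  · rw [polarAngle_of_snd_neg h]
    have := Complex.arg_neg_iff.2 (by simpa using h : (Complex.equivRealProd.symm v).im < 0)
    exact ⟨by linarith [Complex.neg_pi_lt_arg (Complex.equivRealProd.symm v)], by linarith⟩

theorem polarAngle_coe (v : ℝ × ℝ) :
    (polarAngle v : Real.Angle) = Complex.arg (Complex.equivRealProd.symm v) := by
  rcases le_or_gt 0 v.2 with h | h
  · rw [polarAngle_of_snd_nonneg h]
  · rw [polarAngle_of_snd_neg h, Real.Angle.coe_add, Real.Angle.coe_two_pi, add_zero]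

@[simp] theorem polarAngle_zero : polarAngle 0 = 0 := by
  simp [polarAngle_of_snd_nonneg (le_refl (0 : ℝ × ℝ).2)]

theorem polarAngle_zero_one : polarAngle (0, 1) = π / 2 := by
  rw [polarAngle_of_snd_nonneg zero_le_one]
  simp

theorem snd_eq_zero_of_polarAngle_nonpos {v : ℝ × ℝ} (h : polarAngle v ≤ 0) : v.2 = 0 := by
  rcases lt_or_ge v.2 0 with hv | hv
  · linarith [pi_lt_polarAngle hv, pi_pos]
  · rw [polarAngle_of_snd_nonneg hv] at h
    simpa using (Complex.arg_eq_zero_iff.1 (le_antisymm h (Complex.arg_nonneg_iff.2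
      (by simpa using hv)))).2

theorem polarAngle_lt_three_pi_div_two {v : ℝ × ℝ} (h : v.1 < 0 ∨ 0 ≤ v.2) :
    polarAngle v < 3 * π / 2 := by
  rcases le_or_gt 0 v.2 with h2 | h2
  · rw [polarAngle_of_snd_nonneg h2]
    linarith [Complex.arg_le_pi (Complex.equivRealProd.symm v), pi_pos]
  · have h1 : v.1 < 0 := h.resolve_right h2.not_ge
    have := (Complex.neg_pi_div_two_le_arg_iff (z := Complex.equivRealProd.symm v)).not.2
      (by simp [h1, h2])
    rw [polarAngle_of_snd_neg h2]
    linarith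

theorem polarAngle_le_polarAngle_iff {p : ℝ × ℝ} (hp : 0 < p.2) (v : ℝ × ℝ) :
    polarAngle v ≤ polarAngle p ↔ 0 ≤ v.2 ∧ v.2 * p.1 ≤ v.1 * p.2 := by
  rw [polarAngle_of_snd_nonneg hp.le]
  rcases lt_or_ge v.2 0 with hv | hv
  · simp only [hv.not_ge, false_and, iff_false, not_le]
    linarith [pi_lt_polarAngle hv, Complex.arg_le_pi (Complex.equivRealProd.symm p)]
  rcases eq_or_ne v 0 with rfl | hv0
  · simpa using (Complex.arg_nonneg_iff (z := Complex.equivRealProd.symm p)).2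
      (by simpa using hp.le)
  rw [polarAngle_of_snd_nonneg hv, Complex.arg_le_arg_iff_im_mul_re_le_re_mul_im
    (fun h => hv0 (by simpa [Prod.ext_iff, Complex.ext_iff] using h)) (by simpa using hv)
    (by simpa using hp)]
  simp [hv]

theorem measurable_polarAngle : Measurable polarAngle := by
  have harg : Measurable fun v : ℝ × ℝ => Complex.arg ((v.1 : ℂ) + v.2 * Complex.I) :=
    Complex.measurable_arg.comp (by fun_prop)
  exact Measurable.ite (measurableSet_le measurable_const harg) harg (harg.add_const _)

def rot90 : ℝ × ℝ ≃ ℝ × ℝ where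
  toFun v := (-v.2, v.1)
  invFun v := (v.2, -v.1)
  left_inv v := by simp
  right_inv v := by simp

@[simp] theorem rot90_apply (v : ℝ × ℝ) : rot90 v = (-v.2, v.1) := rfl

@[simp] theorem rot90_symm_apply (v : ℝ × ℝ) : rot90.symm v = (v.2, -v.1) := rfl

theorem measurePreserving_rot90_symm : MeasurePreserving rot90.symm := by
  have hswap : MeasurePreserving (Prod.swap : ℝ × ℝ → ℝ × ℝ) := by
    rw [Measure.volume_eq_prod]
    exact Measure.measurePreserving_swap
  have hneg : MeasurePreserving (Prod.map id Neg.neg : ℝ × ℝ → ℝ × ℝ) := by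
    rw [Measure.volume_eq_prod]
    exact (MeasurePreserving.id volume).prod (Measure.measurePreserving_neg volume)
  exact hneg.comp hswap

theorem polarAngle_rot90 {v : ℝ × ℝ} (hv : v ≠ 0) :
    polarAngle (rot90 v) = toIcoMod two_pi_pos 0 (polarAngle v + π / 2) := by
  have hz : Complex.equivRealProd.symm v ≠ 0 := fun h =>
    hv (by simpa [Prod.ext_iff, Complex.ext_iff] using h)
  have hrot : Complex.equivRealProd.symm (rot90 v) = Complex.I * Complex.equivRealProd.symm v := by
    apply Complex.ext <;> simp
  have hangle : ((polarAngle v + π / 2 : ℝ) : Real.Angle) = polarAngle (rot90 v) := by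
    rw [Real.Angle.coe_add, polarAngle_coe, polarAngle_coe, hrot,
      Complex.arg_mul_coe_angle Complex.I_ne_zero hz, Complex.arg_I, add_comm]
  obtain ⟨k, hk⟩ := Real.Angle.angle_eq_iff_two_pi_dvd_sub.1 hangle
  rw [eq_comm, toIcoMod_eq_iff, zero_add]
  exact ⟨polarAngle_mem_Ico _, k, by rw [zsmul_eq_mul]; linarith⟩

theorem polarAngle_rot90_of_lt {v : ℝ × ℝ} (hv : v ≠ 0) (h : polarAngle v < 3 * π / 2) :
    polarAngle (rot90 v) = polarAngle v + π / 2 := by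
  rw [polarAngle_rot90 hv, toIcoMod_eq_self]
  constructor <;> linarith [(polarAngle_mem_Ico v).1, pi_pos]

theorem polarAngle_rot90_lt_of_le {v : ℝ × ℝ} (hv : v ≠ 0)
    (h : 3 * π / 2 ≤ polarAngle v) :
    polarAngle (rot90 v) < π / 2 := by
  rw [polarAngle_rot90 hv, ← toIcoMod_sub, (toIcoMod_eq_self _).2]
  · linarith [(polarAngle_mem_Ico v).2]
  · constructor <;> linarith [(polarAngle_mem_Ico v).2]

def unitSquare : Set (ℝ × ℝ) := {v | max |v.1| |v.2| ≤ 1}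

theorem unitSquare_eq_Icc_prod : unitSquare = Icc (-1) 1 ×ˢ Icc (-1) 1 := by
  ext v
  simp only [unitSquare, mem_ofPred_eq, mem_prod, mem_Icc, max_le_iff, abs_le]

theorem volume_unitSquare : volume unitSquare = 4 := by
  rw [unitSquare_eq_Icc_prod, Measure.volume_eq_prod, Measure.prod_prod, Real.volume_Icc,
    ← ENNReal.ofReal_mul (by norm_num)]
  norm_num

theorem frontier_unitSquare : frontier unitSquare = {v | max |v.1| |v.2| = 1} := by
  have : unitSquare = Metric.closedBall 0 1 := by
    ext v
    simp [unitSquare, Prod.norm_def]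
  rw [this, frontier_closedBall _ one_ne_zero]
  ext v
  simp [Prod.norm_def]

theorem rot90_symm_mem_unitSquare_iff {v : ℝ × ℝ} :
    rot90.symm v ∈ unitSquare ↔ v ∈ unitSquare := by
  simp [unitSquare, and_comm]

namespace unitSquare

def sector (β : ℝ) : Set (ℝ × ℝ) := {v | v ∈ unitSquare ∧ polarAngle v ≤ β}

theorem measurableSet_sector (β : ℝ) : MeasurableSet (sector β) :=
  (unitSquare_eq_Icc_prod ▸ measurableSet_Icc.prod measurableSet_Icc).inter
    (measurableSet_le measurable_polarAngle measurable_const)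

theorem volume_sector_lt_top (β : ℝ) : volume (sector β) < ⊤ :=
  (measure_mono fun _ hv => hv.1).trans_lt (by simp [volume_unitSquare])

theorem volume_sector_pi_div_two : volume (sector (π / 2)) = 1 := by
  have : sector (π / 2) = Icc 0 1 ×ˢ Icc 0 1 := by
    ext v
    simp only [sector, ← polarAngle_zero_one, polarAngle_le_polarAngle_iff (p := (0, 1)) one_pos,
      unitSquare, mem_ofPred_eq,
      mem_prod, mem_Icc, max_le_iff, abs_le]
    constructor
    · rintro ⟨⟨⟨-, h1⟩, -, h2⟩, h3, h4⟩
      exact ⟨⟨by linarith, h1⟩, h3, h2⟩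
    · rintro ⟨⟨h1, h2⟩, h3, h4⟩
      exact ⟨⟨⟨by linarith, h2⟩, by linarith, h4⟩, h3, by linarith⟩
  rw [this, Measure.volume_eq_prod, Measure.prod_prod, Real.volume_Icc]
  norm_num

theorem sector_add_pi_div_two {β : ℝ} (h0 : 0 ≤ β) (h : β < 3 * π / 2) :
    sector (β + π / 2) = sector (π / 2) ∪ rot90.symm ⁻¹' sector β := by
  ext w
  constructor
  · rintro ⟨hw, hpa⟩
    by_cases hw' : polarAngle w ≤ π / 2
    · exact Or.inl ⟨hw, hw'⟩
    right
    have hw0 : w ≠ 0 := by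
      rintro rfl
      simp only [polarAngle_zero, not_le] at hw'
      linarith [pi_pos]
    have hv0 : rot90.symm w ≠ 0 := by simpa [Prod.ext_iff, and_comm] using hw0
    refine ⟨rot90_symm_mem_unitSquare_iff.2 hw, ?_⟩
    rcases lt_or_ge (polarAngle (rot90.symm w)) (3 * π / 2) with h1 | h1
    · rw [← rot90.apply_symm_apply w, polarAngle_rot90_of_lt hv0 h1] at hpa
      linarith
    · have := polarAngle_rot90_lt_of_le hv0 h1
      rw [rot90.apply_symm_apply] at this
      exact absurd this.le hw'
  · rintro (⟨hw, hpa⟩ | ⟨hv, hpa⟩)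
    · exact ⟨hw, by linarith [pi_pos]⟩
    refine ⟨rot90_symm_mem_unitSquare_iff.1 hv, ?_⟩
    rcases eq_or_ne (rot90.symm w) 0 with hv0 | hv0
    · rw [rot90.symm_apply_eq.1 hv0]
      simp only [rot90_apply, Prod.fst_zero, Prod.snd_zero, neg_zero, Prod.mk_zero_zero,
        polarAngle_zero]
      linarith [pi_pos]
    · rw [← rot90.apply_symm_apply w, polarAngle_rot90_of_lt hv0 (by linarith)]
      linarith

theorem sector_pi_div_two_inter_subset {β : ℝ} (h : β < 3 * π / 2) :
    sector (π / 2) ∩ rot90.symm ⁻¹' sector β ⊆ {w | w.1 = 0} := by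
  rintro w ⟨⟨-, hw⟩, -, hv⟩
  rw [← polarAngle_zero_one] at hw
  have hquadrant := (polarAngle_le_polarAngle_iff (p := (0, 1)) one_pos w).1 hw
  show w.1 = 0
  by_contra! hw1
  have hw1 : 0 < w.1 := lt_of_le_of_ne (by simpa using hquadrant.2) hw1.symm
  have hv0 : rot90.symm w ≠ 0 := by simp [Prod.ext_iff, hw1.ne']
  have hpi := pi_lt_polarAngle (v := rot90.symm w) (by simpa using hw1)
  have hrot := polarAngle_rot90_of_lt hv0 (by linarith)
  rw [rot90.apply_symm_apply] at hrot
  linarith [pi_pos, polarAngle_zero_one]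

theorem volume_sector_add_pi_div_two {β : ℝ} (h0 : 0 ≤ β) (h : β < 3 * π / 2) :
    volume (sector (β + π / 2)) = 1 + volume (sector β) := by
  have hline : volume {w : ℝ × ℝ | w.1 = 0} = 0 := by
    rw [show {w : ℝ × ℝ | w.1 = 0} = {0} ×ˢ univ by ext; simp, Measure.volume_eq_prod,
      Measure.prod_prod]
    simp
  rw [sector_add_pi_div_two h0 h, measure_union₀
      ((measurableSet_sector β).preimage measurePreserving_rot90_symm.measurable).nullMeasurableSet
      (measure_mono_null (sector_pi_div_two_inter_subset h) hline),
    volume_sector_pi_div_two,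
    measurePreserving_rot90_symm.measure_preimage (measurableSet_sector β).nullMeasurableSet]

theorem volume_sector_zero : volume (sector 0) = 0 := by
  refine measure_mono_null (t := univ ×ˢ {0}) (fun v hv => ⟨trivial,
    snd_eq_zero_of_polarAngle_nonpos hv.2⟩) ?_
  rw [Measure.volume_eq_prod, Measure.prod_prod]
  simp

theorem volume_sector_polarAngle_right_edge {t : ℝ} (ht : 0 < t) (ht1 : t ≤ 1) :
    volume (sector (polarAngle (1, t))) = ENNReal.ofReal (t / 2) := by
  have hset : sector (polarAngle (1, t)) =
      {p : ℝ × ℝ | p.1 ∈ Icc 0 1 ∧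
        p.2 ∈ Icc ((fun _ => 0) p.1) ((fun x => t * x) p.1)} := by
    ext v
    simp only [sector, polarAngle_le_polarAngle_iff (p := (1, t)) ht, unitSquare,
      mem_ofPred_eq, mem_Icc, max_le_iff, abs_le]
    constructor
    · rintro ⟨⟨⟨-, h1⟩, -⟩, h2, h3⟩
      exact ⟨⟨by nlinarith, h1⟩, h2, by linarith⟩
    · rintro ⟨⟨h1, h2⟩, h3, h4⟩
      exact ⟨⟨⟨by linarith, h2⟩, by linarith, by nlinarith⟩, h3, by linarith⟩
  rw [hset, volume_region_between_cc_eq_integral continuous_const (continuous_const_mul t)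
    zero_le_one fun x hx => mul_nonneg ht.le hx.1]
  congr 1
  simp only [sub_zero]
  rw [intervalIntegral.integral_const_mul, integral_id]
  ring

theorem volume_sector_polarAngle_top_edge {c : ℝ} (hc : 0 ≤ c) (hc1 : c ≤ 1) :
    volume (sector (polarAngle (c, 1))) = ENNReal.ofReal (1 - c / 2) := by
  have hset : sector (polarAngle (c, 1)) = Prod.swap ⁻¹'
      {p : ℝ × ℝ | p.1 ∈ Icc 0 1 ∧
        p.2 ∈ Icc ((fun x => c * x) p.1) ((fun _ => 1) p.1)} := by
    ext v
    simp only [sector, polarAngle_le_polarAngle_iff (p := (c, 1)) one_pos, unitSquare,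
      mem_preimage, Prod.fst_swap, Prod.snd_swap, mem_ofPred_eq, mem_Icc, max_le_iff, abs_le]
    constructor
    · rintro ⟨⟨⟨-, h1⟩, -, h2⟩, h3, h4⟩
      exact ⟨⟨h3, h2⟩, by linarith, h1⟩
    · rintro ⟨⟨h1, h2⟩, h3, h4⟩
      exact ⟨⟨⟨by nlinarith, h4⟩, by linarith, h2⟩, h1, by linarith⟩
  have hswap : MeasurePreserving (Prod.swap : ℝ × ℝ → ℝ × ℝ) :=
    Measure.measurePreserving_swap
  rw [hset, hswap.measure_preimage
    (measurableSet_region_between_cc (by fun_prop) measurable_const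
      measurableSet_Icc).nullMeasurableSet,
    volume_region_between_cc_eq_integral (continuous_const_mul c)
      continuous_const zero_le_one fun x hx => by nlinarith [hx.1, hx.2]]
  congr 1
  rw [intervalIntegral.integral_sub intervalIntegrable_const
    ((continuous_const_mul c).intervalIntegrable 0 1), intervalIntegral.integral_const_mul,
    integral_id]
  norm_num
  ring

-- Runs counterclockwise around the boundary from `(1, 0)`, with corners at `θ = 1, 3, 5, 7`.
noncomputable def path (θ : ℝ) : ℝ × ℝ :=
  if θ ≤ 1 then (1, θ) else if θ ≤ 3 then (2 - θ, 1) else if θ ≤ 5 then (-1, 4 - θ)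
  else if θ ≤ 7 then (θ - 6, -1) else (1, θ - 8)

noncomputable def param (θ : ℝ) : ℝ × ℝ :=
  path (toIcoMod (by norm_num : (0 : ℝ) < 8) 0 θ)

theorem param_of_mem_Ico {θ : ℝ} (h : θ ∈ Ico 0 8) : param θ = path θ := by
  rw [param, (toIcoMod_eq_self _).2 (by simpa using h)]

theorem param_periodic : Function.Periodic param 8 := fun θ => by
  simp only [param, toIcoMod_add_right]

theorem path_ne_zero (θ : ℝ) : path θ ≠ 0 := by
  unfold path
  split_ifs <;> simp [Prod.ext_iff]

theorem path_add_two {θ : ℝ} (h : θ ∈ Ico 0 6) : path (θ + 2) = rot90 (path θ) := by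
  obtain ⟨h0, h6⟩ := h
  unfold path
  split_ifs <;> ext <;> simp only [rot90_apply] <;> linarith

theorem path_sub_six {θ : ℝ} (h : θ ∈ Ico 6 8) : path (θ - 6) = rot90 (path θ) := by
  obtain ⟨h6, h8⟩ := h
  unfold path
  split_ifs <;> ext <;> simp only [rot90_apply] <;> linarith

theorem param_add_two (θ : ℝ) : param (θ + 2) = rot90 (param θ) := by
  refine congrFun (Function.Periodic.eq_of_eqOn_Ico (f := fun θ => param (θ + 2))
    (g := fun θ => rot90 (param θ)) (fun θ => ?_) (fun θ => congrArg rot90 (param_periodic θ))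
    (by norm_num) fun θ hθ => ?_) θ
  · simp only [add_right_comm θ 8 2, param_periodic (θ + 2)]
  show param (θ + 2) = rot90 (param θ)
  rw [param_of_mem_Ico hθ]
  rcases lt_or_ge θ 6 with h6 | h6
  · rw [param_of_mem_Ico (θ := θ + 2) ⟨by linarith [hθ.1], by linarith⟩,
      path_add_two ⟨hθ.1, h6⟩]
  · rw [show θ + 2 = θ - 6 + 8 by ring, param_periodic,
      param_of_mem_Ico (θ := θ - 6) ⟨by linarith, by linarith [hθ.2]⟩,
      path_sub_six ⟨h6, hθ.2⟩]

theorem sectorArea_path_of_lt_two {θ : ℝ} (h : θ ∈ Ico 0 2) :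
    sectorArea unitSquare (polarAngle (path θ)) = θ / 2 := by
  obtain ⟨h0, h2⟩ := h
  change (volume (sector _)).toReal = θ / 2
  rcases h0.eq_or_lt with rfl | h0
  · have hpa : polarAngle (path 0) = 0 := by
      simp [path, polarAngle_of_snd_nonneg]
    simp [hpa, volume_sector_zero]
  rcases le_or_gt θ 1 with h1 | h1
  · rw [show path θ = (1, θ) from if_pos h1, volume_sector_polarAngle_right_edge h0 h1,
      ENNReal.toReal_ofReal (by linarith)]
  · rw [show path θ = (2 - θ, 1) by simp [path, h1.not_ge, (by linarith : θ ≤ 3)],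
      volume_sector_polarAngle_top_edge (by linarith) (by linarith),
      ENNReal.toReal_ofReal (by linarith)]
    ring

theorem sectorArea_path_add_two {θ : ℝ} (h : θ ∈ Ico 0 6) :
    sectorArea unitSquare (polarAngle (path (θ + 2))) =
      sectorArea unitSquare (polarAngle (path θ)) + 1 := by
  have hlt : polarAngle (path θ) < 3 * π / 2 := by
    refine polarAngle_lt_three_pi_div_two ?_
    obtain ⟨h0, h6⟩ := h
    unfold path
    split_ifs <;>
      first | exact Or.inl (by dsimp only; linarith) | exact Or.inr (by dsimp only; linarith)
  change (volume (sector _)).toReal = (volume (sector _)).toReal + 1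
  rw [path_add_two h, polarAngle_rot90_of_lt (path_ne_zero θ) hlt,
    volume_sector_add_pi_div_two (polarAngle_mem_Ico _).1 hlt,
    ENNReal.toReal_add ENNReal.one_ne_top (volume_sector_lt_top _).ne, add_comm]
  simp

theorem sectorArea_path {θ : ℝ} (h : θ ∈ Ico 0 8) :
    sectorArea unitSquare (polarAngle (path θ)) = θ / 2 := by
  suffices ∀ n : ℕ, ∀ θ ∈ Ico (0 : ℝ) 8, θ < 2 * (n + 1) →
      sectorArea unitSquare (polarAngle (path θ)) = θ / 2 from
    this 3 θ h (by push_cast; linarith [h.2])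
  intro n
  induction n with
  | zero => exact fun θ h hθ => sectorArea_path_of_lt_two ⟨h.1, by simpa using hθ⟩
  | succ n ih =>
    intro θ h hθ
    rcases lt_or_ge θ 2 with h2 | h2
    · exact sectorArea_path_of_lt_two ⟨h.1, h2⟩
    have hstep := sectorArea_path_add_two (θ := θ - 2) ⟨by linarith, by linarith [h.2]⟩
    rw [sub_add_cancel] at hstep
    rw [hstep, ih (θ - 2) ⟨by linarith, by linarith [h.2]⟩ (by push_cast at hθ; linarith)]
    ring

theorem exists_path_eq {a : ℝ × ℝ} (ha : a ∈ frontier unitSquare) :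
    ∃ θ ∈ Ico 0 8, path θ = a := by
  obtain ⟨x, y⟩ := a
  rw [frontier_unitSquare, mem_ofPred_eq, max_eq_iff] at ha
  have hx := abs_le.1 (show |x| ≤ 1 by rcases ha with ⟨h1, -⟩ | ⟨h1, h2⟩ <;> linarith)
  have hy := abs_le.1 (show |y| ≤ 1 by rcases ha with ⟨h1, h2⟩ | ⟨h1, -⟩ <;> linarith)
  have hside : (x = 1 ∨ x = -1) ∨ (y = 1 ∨ y = -1) := by
    rcases ha with ⟨h1, -⟩ | ⟨h1, -⟩
    · exact Or.inl (abs_eq zero_le_one |>.1 h1)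
    · exact Or.inr (abs_eq zero_le_one |>.1 h1)
  rcases hside with (rfl | rfl) | (rfl | rfl)
  · rcases le_or_gt 0 y with hy0 | hy0
    · refine ⟨y, ⟨hy0, by linarith⟩, ?_⟩
      simp [path, hy.2]
    · refine ⟨8 + y, ⟨by linarith, by linarith⟩, ?_⟩
      unfold path
      split_ifs <;> ext <;> simp only <;> linarith
  · refine ⟨4 - y, ⟨by linarith, by linarith⟩, ?_⟩
    unfold path
    split_ifs <;> ext <;> simp only <;> linarith
  · refine ⟨2 - x, ⟨by linarith, by linarith⟩, ?_⟩
    unfold path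
    split_ifs <;> ext <;> simp only <;> linarith
  · refine ⟨6 + x, ⟨by linarith, by linarith⟩, ?_⟩
    unfold path
    split_ifs <;> ext <;> simp only <;> linarith

theorem eq_param_of_isCT {Q : ℝ → ℝ × ℝ} (hQ : IsCT unitSquare Q) : Q = param := by
  have h8 : 2 * area2 unitSquare = 8 := by
    rw [area2, volume_unitSquare]
    norm_num
  rw [IsCT, h8] at hQ
  refine Function.Periodic.eq_of_eqOn_Ico hQ.1 param_periodic (by norm_num) fun θ hθ => ?_
  obtain ⟨hfr, harea⟩ := hQ.2 θ hθ
  obtain ⟨θ', hθ', hpath⟩ := exists_path_eq hfr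
  have hθθ' : θ' = θ := by
    have := sectorArea_path hθ'
    rw [hpath, harea] at this
    linarith
  rw [param_of_mem_Ico hθ, ← hpath, hθθ']

theorem fst_path_of_mem_Icc {θ : ℝ} (h : θ ∈ Icc 1 7) :
    (path θ).1 = 1 / 2 * |θ - 3| + 1 / 2 * |θ - 5| - 2 := by
  obtain ⟨h1, h7⟩ := h
  unfold path
  split_ifs <;> simp only <;>
    rcases abs_cases (θ - 3) with ⟨h3, h3'⟩ | ⟨h3, h3'⟩ <;>
    rcases abs_cases (θ - 5) with ⟨h5, h5'⟩ | ⟨h5, h5'⟩ <;> linarith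

theorem fst_param_eq_one {θ : ℝ} (h : θ ∈ Icc 0 1 ∪ Icc 7 8) : (param θ).1 = 1 := by
  rcases h with ⟨h0, h1⟩ | ⟨h7, h8⟩
  · simp [param_of_mem_Ico ⟨h0, by linarith⟩, path, h1]
  rcases h8.lt_or_eq with h8 | rfl
  · rw [param_of_mem_Ico ⟨by linarith, h8⟩]
    unfold path
    split_ifs <;> simp only <;> linarith
  · rw [show (8 : ℝ) = 0 + 8 by norm_num, param_periodic,
      param_of_mem_Ico ⟨le_rfl, by norm_num⟩]
    simp [path]

end unitSquare

/-- For the square `Ω° = {max(|u|, |v|) ≤ 1}`: `cos_{Ω°}`, `sin_{Ω°}` are `8`-periodic,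
`cos_{Ω°} θ = 1` on `[0,1] ∪ [7,8]`, `cos_{Ω°} θ = ½|θ−3| + ½|θ−5| − 2` on `[1,7]`,
and `sin_{Ω°} θ = cos_{Ω°}(θ − 2)`. -/
theorem stmt16 (Q : ℝ → ℝ × ℝ)
    (hQ : IsCT {v : ℝ × ℝ | max |v.1| |v.2| ≤ 1} Q) :
    (∀ θ : ℝ, Q (θ + 8) = Q θ) ∧
    (∀ θ ∈ Set.Icc (0 : ℝ) 1 ∪ Set.Icc (7 : ℝ) 8, (Q θ).1 = 1) ∧
    (∀ θ ∈ Set.Icc (1 : ℝ) 7, (Q θ).1 = 1 / 2 * |θ - 3| + 1 / 2 * |θ - 5| - 2) ∧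
    (∀ θ : ℝ, (Q θ).2 = (Q (θ - 2)).1) := by
  obtain rfl := unitSquare.eq_param_of_isCT hQ
  refine ⟨unitSquare.param_periodic, fun θ hθ => unitSquare.fst_param_eq_one hθ,
    fun θ hθ => ?_, fun θ => ?_⟩
  · rw [unitSquare.param_of_mem_Ico ⟨by linarith [hθ.1], by linarith [hθ.2]⟩]
    exact unitSquare.fst_path_of_mem_Icc hθ
  · simpa using congrArg Prod.snd (unitSquare.param_add_two (θ - 2))
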